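/- Let d = 1 and k = 4. The orbit of the row vector δ₂ = (0,1,0,0) ∈ (ℤ/2ℤ)⁴ under right multiplication by the subgroup H₂(1,4) of GL(4, ℤ/2ℤ) generated by the reductions modulo 2 of M₀(1,4) and M₁ is exactly the set {(0,0,1,0), (0,1,0,0), (0,1,0,1), (0,1,1,0), (0,1,1,1), (1,0,0,1), (1,0,1,0), (1,1,1,0), (1,1,1,1)}. -/

import Mathlib

/-!
The nine-element set contains `δ₂` and is mapped into itself by both generators; being finite,
it is then mapped into itself by their inverses too, hence by the whole group, so it contains
the orbit. Conversely, a breadth-first search from `δ₂` along the two generators reaches all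
nine vectors.
-/

/-- The monodromy matrix `M₀(d,k)` around `0` of the Picard–Fuchs equation of certain
mirror Calabi–Yau threefolds. -/
def M0 (d k : ℤ) : Matrix (Fin 4) (Fin 4) ℤ :=
  !![1, 1, 0, 0; 0, 1, 0, 0; d, d, 1, 0; 0, -k, -1, 1]

/-- The monodromy matrix `M₁` around `1`. -/
def M1 : Matrix (Fin 4) (Fin 4) ℤ :=
  !![1, 0, 0, 0; 0, 1, 0, 1; 0, 0, 1, 0; 0, 0, 0, 1]

lemma M0_det (d k : ℤ) : (M0 d k).det = 1 := by
  simp [M0, Matrix.det_succ_row_zero, Fin.sum_univ_succ, Fin.succAbove]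

lemma M1_det : M1.det = 1 := by
  simp [M1, Matrix.det_succ_row_zero, Fin.sum_univ_succ, Fin.succAbove]

/-- The reduction modulo `p` of `M₀(d,k)`, as an element of `GL (Fin 4) (ZMod p)`. -/
noncomputable def M0p (p : ℕ) (d k : ℤ) : GL (Fin 4) (ZMod p) :=
  Matrix.nonsingInvUnit ((M0 d k).map (Int.castRingHom (ZMod p)))
    (by rw [← RingHom.mapMatrix_apply, ← RingHom.map_det, M0_det]; simp)

/-- The reduction modulo `p` of `M₁`, as an element of `GL (Fin 4) (ZMod p)`. -/
noncomputable def M1p (p : ℕ) : GL (Fin 4) (ZMod p) :=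
  Matrix.nonsingInvUnit (M1.map (Int.castRingHom (ZMod p)))
    (by rw [← RingHom.mapMatrix_apply, ← RingHom.map_det, M1_det]; simp)

open Matrix

section RowOrbit

variable {n R : Type*} [Fintype n] [DecidableEq n] [Semiring R]

def rowOrbit (H : Subgroup (GL n R)) (v : n → R) : Set (n → R) :=
  {w | ∃ g ∈ H, w = vecMul v (g : Matrix n n R)}

lemma vecMul_mem_rowOrbit {H : Subgroup (GL n R)} {v w : n → R} (hw : w ∈ rowOrbit H v)
    {g : GL n R} (hg : g ∈ H) : vecMul w (g : Matrix n n R) ∈ rowOrbit H v := by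
  obtain ⟨h, hh, rfl⟩ := hw
  exact ⟨h * g, H.mul_mem hh hg, by rw [Units.val_mul, vecMul_vecMul]⟩

lemma Set.MapsTo.vecMul_inv {S : Set (n → R)} (hS : S.Finite) {g : GL n R}
    (hg : S.MapsTo (vecMul · (g : Matrix n n R)) S) :
    S.MapsTo (vecMul · ((g⁻¹ : GL n R) : Matrix n n R)) S := by
  have vecMul_inv_vecMul (u : n → R) :
      vecMul (vecMul u (g : Matrix n n R)) (g⁻¹ : GL n R) = u := by
    rw [vecMul_vecMul, ← Units.val_mul, mul_inv_cancel, Units.val_one, vecMul_one]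
  have hinj : S.InjOn (vecMul · (g : Matrix n n R)) := fun u _ w _ huw => by
    simpa only [vecMul_inv_vecMul] using congrArg (vecMul · (g⁻¹ : GL n R).val) huw
  intro v hv
  obtain ⟨u, hu, rfl⟩ := ((hS.injOn_iff_bijOn_of_mapsTo hg).mp hinj).surjOn hv
  simpa only [vecMul_inv_vecMul] using hu

lemma mapsTo_vecMul_of_mem_closure {s : Set (GL n R)} {S : Set (n → R)} (hS : S.Finite)
    (hs : ∀ g ∈ s, S.MapsTo (vecMul · (g : Matrix n n R)) S) {g : GL n R}
    (hg : g ∈ Subgroup.closure s) : S.MapsTo (vecMul · (g : Matrix n n R)) S := by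
  induction hg using Subgroup.closure_induction with
  | mem g hg => exact hs g hg
  | one => intro v hv; simpa only [Units.val_one, vecMul_one] using hv
  | mul g h _ _ ihg ihh =>
    intro v hv
    simpa only [Units.val_mul, ← vecMul_vecMul] using ihh (ihg hv)
  | inv g _ ih => exact ih.vecMul_inv hS

lemma rowOrbit_closure_subset {s : Set (GL n R)} {S : Set (n → R)} (hS : S.Finite)
    (hs : ∀ g ∈ s, S.MapsTo (vecMul · (g : Matrix n n R)) S) {v : n → R} (hv : v ∈ S) :
    rowOrbit (Subgroup.closure s) v ⊆ S := by
  rintro _ ⟨g, hg, rfl⟩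
  exact mapsTo_vecMul_of_mem_closure hS hs hg hv

end RowOrbit

lemma coe_M0p (p : ℕ) (d k : ℤ) :
    (M0p p d k : Matrix (Fin 4) (Fin 4) (ZMod p)) = (M0 d k).map (Int.castRingHom (ZMod p)) :=
  rfl

lemma coe_M1p (p : ℕ) :
    (M1p p : Matrix (Fin 4) (Fin 4) (ZMod p)) = M1.map (Int.castRingHom (ZMod p)) :=
  rfl

lemma coe_M0p_two_one_four : (M0p 2 1 4 : Matrix (Fin 4) (Fin 4) (ZMod 2)) =
    !![1, 1, 0, 0; 0, 1, 0, 0; 1, 1, 1, 0; 0, 0, 1, 1] := by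
  rw [coe_M0p]; decide

lemma coe_M1p_two : (M1p 2 : Matrix (Fin 4) (Fin 4) (ZMod 2)) =
    !![1, 0, 0, 0; 0, 1, 0, 1; 0, 0, 1, 0; 0, 0, 0, 1] := by
  rw [coe_M1p]; decide

def orbitDeltaTwo : Set (Fin 4 → ZMod 2) :=
  {![0,0,1,0], ![0,1,0,0], ![0,1,0,1], ![0,1,1,0], ![0,1,1,1], ![1,0,0,1], ![1,0,1,0],
    ![1,1,1,0], ![1,1,1,1]}

lemma mapsTo_vecMul_M0p :
    orbitDeltaTwo.MapsTo (vecMul · (M0p 2 1 4 : Matrix (Fin 4) (Fin 4) (ZMod 2)))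
      orbitDeltaTwo := by
  intro v hv
  rw [coe_M0p_two_one_four]
  simp only [orbitDeltaTwo, Set.mem_insert_iff, Set.mem_singleton_iff] at hv ⊢
  obtain rfl | rfl | rfl | rfl | rfl | rfl | rfl | rfl | rfl := hv <;> decide

lemma mapsTo_vecMul_M1p :
    orbitDeltaTwo.MapsTo (vecMul · (M1p 2 : Matrix (Fin 4) (Fin 4) (ZMod 2))) orbitDeltaTwo := by
  intro v hv
  rw [coe_M1p_two]
  simp only [orbitDeltaTwo, Set.mem_insert_iff, Set.mem_singleton_iff] at hv ⊢
  obtain rfl | rfl | rfl | rfl | rfl | rfl | rfl | rfl | rfl := hv <;> decide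

theorem orbit2_delta2_14 :
    {w : Fin 4 → ZMod 2 |
      ∃ g ∈ Subgroup.closure {M0p 2 1 4, M1p 2},
        w = Matrix.vecMul ![0,1,0,0] (g : Matrix (Fin 4) (Fin 4) (ZMod 2))} =
    {![0,0,1,0], ![0,1,0,0], ![0,1,0,1], ![0,1,1,0], ![0,1,1,1], ![1,0,0,1], ![1,0,1,0], ![1,1,1,0], ![1,1,1,1]} := by
  change rowOrbit _ _ = orbitDeltaTwo
  refine (rowOrbit_closure_subset (Set.toFinite _) ?_ (by simp [orbitDeltaTwo])).antisymm ?_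
  · rintro g (rfl | rfl)
    exacts [mapsTo_vecMul_M0p, mapsTo_vecMul_M1p]
  · set O := rowOrbit (Subgroup.closure {M0p 2 1 4, M1p 2}) ![0, 1, 0, 0]
    have stepA (v : Fin 4 → ZMod 2) (hv : v ∈ O) w
        (hw : vecMul v !![1, 1, 0, 0; 0, 1, 0, 0; 1, 1, 1, 0; 0, 0, 1, 1] = w) : w ∈ O := by
      rw [← hw, ← coe_M0p_two_one_four]
      exact vecMul_mem_rowOrbit hv (Subgroup.subset_closure (by simp))
    have stepB (v : Fin 4 → ZMod 2) (hv : v ∈ O) w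
        (hw : vecMul v !![1, 0, 0, 0; 0, 1, 0, 1; 0, 0, 1, 0; 0, 0, 0, 1] = w) : w ∈ O := by
      rw [← hw, ← coe_M1p_two]
      exact vecMul_mem_rowOrbit hv (Subgroup.subset_closure (by simp))
    have h0100 : ![0, 1, 0, 0] ∈ O := ⟨1, one_mem _, by rw [Units.val_one, vecMul_one]⟩
    have h0101 := stepB _ h0100 ![0, 1, 0, 1] (by decide)
    have h0111 := stepA _ h0101 ![0, 1, 1, 1] (by decide)
    have h1001 := stepA _ h0111 ![1, 0, 0, 1] (by decide)
    have h0110 := stepB _ h0111 ![0, 1, 1, 0] (by decide)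
    have h1111 := stepA _ h1001 ![1, 1, 1, 1] (by decide)
    have h1010 := stepA _ h0110 ![1, 0, 1, 0] (by decide)
    have h1110 := stepB _ h1111 ![1, 1, 1, 0] (by decide)
    have h0010 := stepA _ h1010 ![0, 0, 1, 0] (by decide)
    simp only [orbitDeltaTwo, Set.insert_subset_iff, Set.singleton_subset_iff]
    exact ⟨h0010, h0100, h0101, h0110, h0111, h1001, h1010, h1110, h1111⟩
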